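/- If 𝒮 ⊂ B(H) is a multiplicative semigroup and x ∈ H is cyclic for 𝒮 (span(𝒮x) dense in H), then the local commutant C_x(𝒮) equals the commutant 𝒮′. -/
import Mathlib


/-- If `𝒮 ⊂ B(H)` is a multiplicative semigroup and `x` is cyclic for `𝒮`, then the local
commutant `C_x(𝒮)` equals the commutant `𝒮′`. -/
theorem stmt_3 {H : Type*} [NormedAddCommGroup H] [InnerProductSpace ℂ H] [CompleteSpace H]
    (𝒮 : Set (H →L[ℂ] H)) (x : H)
    (hsemi : ∀ S ∈ 𝒮, ∀ T ∈ 𝒮, S * T ∈ 𝒮)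
    (hcyc : Dense ((Submodule.span ℂ ((fun S : H →L[ℂ] H => S x) '' 𝒮) : Submodule ℂ H) : Set H)) :
    {A : H →L[ℂ] H | ∀ S ∈ 𝒮, (A * S - S * A) x = 0} =
      {A : H →L[ℂ] H | ∀ S ∈ 𝒮, A * S = S * A} := by
  ext A
  simp only [Set.mem_setOf_eq]
  constructor
  · intro h S hS
    have hloc : ∀ T ∈ 𝒮, A (T x) = T (A x) := by
      intro T hT
      have := h T hT
      simp only [ContinuousLinearMap.sub_apply, ContinuousLinearMap.mul_apply, sub_eq_zero] at this
      exact this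
    ext y
    have hag : ∀ y ∈ ((Submodule.span ℂ ((fun S : H →L[ℂ] H => S x) '' 𝒮) : Submodule ℂ H) : Set H),
        (A * S) y = (S * A) y := by
      intro y hy
      induction hy using Submodule.span_induction with
      | mem z hz =>
        obtain ⟨T, hT, rfl⟩ := hz
        simp only [ContinuousLinearMap.mul_apply]
        have h1 : A (S (T x)) = A ((S * T) x) := rfl
        rw [h1, hloc _ (hsemi S hS T hT)]
        simp only [ContinuousLinearMap.mul_apply]
        rw [hloc T hT]
      | zero => simp
      | add a b _ _ ha hb => simp [map_add, ha, hb]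
      | smul c a _ ha => simp [map_smul, ha]
    have := Continuous.ext_on hcyc (A * S).continuous (S * A).continuous hag
    exact congrFun this y
  · intro h S hS
    rw [h S hS]
    simp
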